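/- In an AL-monoid where metric betweenness has transitivity t₁ (i.e. (a,b,c)M and (a,d,b)M imply (d,b,c)M), there are no isosceles triangles a,b,c with a*b = b*c for which a*b + b*c equals (a*b)∨(b*c); equivalently, the special inner property holds for metric betweenness. -/
import Mathlib


/-- An Autometrized lattice ordered monoid (AL-monoid). -/
class ALMonoid (A : Type*) extends Lattice A, AddCommMonoid A where
  amul : A → A → A
  add_le_add_left' : ∀ a b : A, a ≤ b → ∀ c : A, c + a ≤ c + b
  amul_core : ∀ a b : A, amul a (a ⊓ b) + b = a ⊔ b
  add_contract : ∀ a x y : A, amul (a + x) (a + y) ≤ amul x y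
  sup_contract : ∀ a x y : A, amul (a ⊔ x) (a ⊔ y) ≤ amul x y
  inf_contract : ∀ a x y : A, amul (a ⊓ x) (a ⊓ y) ≤ amul x y
  amul_contract : ∀ a x y : A, amul (amul a x) (amul a y) ≤ amul x y
  inf_amul_sup : ∀ a b : A, amul a (a ⊔ b) ⊓ amul b (a ⊔ b) = 0
  amul_nonneg : ∀ a b : A, 0 ≤ amul a b
  amul_eq_zero_iff : ∀ a b : A, amul a b = 0 ↔ a = b
  amul_comm : ∀ a b : A, amul a b = amul b a
  amul_triangle : ∀ a b c : A, amul a b ≤ amul a c + amul c b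

open ALMonoid

infixl:70 " ⋆ " => ALMonoid.amul

theorem stmt13 {A : Type*} [ALMonoid A]
    (ht1 : ∀ a b c d : A, a ⋆ b + b ⋆ c = a ⋆ c → a ⋆ d + d ⋆ b = a ⋆ b →
      d ⋆ b + b ⋆ c = d ⋆ c) :
    ¬ ∃ a b c : A, a ≠ b ∧ b ≠ c ∧ c ≠ a ∧ a ⋆ b = b ⋆ c ∧
      a ⋆ b + b ⋆ c = (a ⋆ b) ⊔ (b ⋆ c) := by
  rintro ⟨a, b, c, hab, hbc, hca, heq, hsum⟩
  have hpp : a ⋆ b + a ⋆ b = a ⋆ b := by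
    rw [← heq, sup_idem] at hsum; exact hsum
  have hq0 : (0 : A) ≤ a ⋆ c := amul_nonneg a c
  have hqp : a ⋆ c ≤ a ⋆ b := by
    calc a ⋆ c ≤ a ⋆ b + b ⋆ c := amul_triangle a c b
    _ = a ⋆ b + a ⋆ b := by rw [heq]
    _ = a ⋆ b := hpp
  have hpq : a ⋆ b + a ⋆ c = a ⋆ b := by
    apply le_antisymm
    · calc a ⋆ b + a ⋆ c ≤ a ⋆ b + a ⋆ b := add_le_add_left' _ _ hqp _
      _ = a ⋆ b := hpp
    · calc a ⋆ b = a ⋆ b + 0 := (add_zero _).symm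
      _ ≤ a ⋆ b + a ⋆ c := add_le_add_left' _ _ hq0 _
  have h1 : b ⋆ a + a ⋆ c = b ⋆ c := by rw [amul_comm b a, hpq, heq]
  have h2 : b ⋆ c + c ⋆ a = b ⋆ a := by
    rw [amul_comm c a, amul_comm b a, ← heq, hpq]
  have h3 := ht1 b a c c h1 h2
  rw [(amul_eq_zero_iff c c).mpr rfl, amul_comm c a] at h3
  have hq00 : a ⋆ c = 0 := by
    apply le_antisymm _ hq0
    calc a ⋆ c = a ⋆ c + 0 := (add_zero _).symm
    _ ≤ a ⋆ c + a ⋆ c := add_le_add_left' _ _ hq0 _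
    _ = 0 := h3
  exact hca ((amul_eq_zero_iff a c).mp hq00).symm
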